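/- Let G be a maximal outerplane graph on Fin n with red vertex set R of even cardinality. Suppose G contains two parallel red-blue diagonals {v_i, v_m} and {v_k, v_l}, with v_i, v_k blue and v_l, v_m red (possibly v_l = v_m), and a vertex v_j of degree two in G, such that v_i, v_j, v_k, v_l, v_m occur in this clockwise cyclic order. Then G is augmentable to meet R. -/

import Mathlib

/-- `x` lies strictly inside the open clockwise arc from `a` to `b` on the convex
`n`-gon whose vertices are `Fin n` in clockwise cyclic order. -/
def InArc (n : ℕ) (a b x : Fin n) : Prop :=
  0 < (x - a).val ∧ (x - a).val < (b - a).val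

/-- Two chords of the convex `n`-gon cross: their four endpoints are distinct and
interleave in the cyclic order, i.e. one endpoint of the second chord lies strictly
inside each of the two open arcs determined by the first chord. -/
def Cross (n : ℕ) (e f : Sym2 (Fin n)) : Prop :=
  ∃ a b c d : Fin n, e = s(a, b) ∧ f = s(c, d) ∧ InArc n a b c ∧ InArc n b a d

/-- A boundary edge of the convex `n`-gon: a chord of the form `{i, i+1 (mod n)}`. -/
def IsBoundaryEdge (n : ℕ) (e : Sym2 (Fin n)) : Prop :=
  ∃ i j : Fin n, e = s(i, j) ∧ (j - i).val = 1

/-- A diagonal of the convex `n`-gon: a chord (pair of distinct vertices) that is not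
a boundary edge. -/
def IsDiagonal (n : ℕ) (e : Sym2 (Fin n)) : Prop :=
  ¬ e.IsDiag ∧ ¬ IsBoundaryEdge n e

/-- A maximal outerplane graph (MOP) on `Fin n` (`n ≥ 3`): a simple graph whose edge
set consists of all `n` boundary edges together with `n - 3` pairwise non-crossing
diagonals. -/
def IsMOP (n : ℕ) (G : SimpleGraph (Fin n)) : Prop :=
  3 ≤ n ∧
  (∀ e, IsBoundaryEdge n e → e ∈ G.edgeSet) ∧
  (∀ e ∈ G.edgeSet, IsBoundaryEdge n e ∨ IsDiagonal n e) ∧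
  (∀ e ∈ G.edgeSet, ∀ f ∈ G.edgeSet, ¬ Cross n e f) ∧
  {e ∈ G.edgeSet | IsDiagonal n e}.ncard = n - 3

/-- `G` is (topologically) augmentable to meet the parity constraints with red set `R`:
there is a simple graph `H` on `Fin n`, edge-disjoint from `G`, whose edges are
pairwise non-crossing chords, in which every red vertex has odd degree and every blue
vertex has even degree. -/
def Augmentable (n : ℕ) (G : SimpleGraph (Fin n)) (R : Set (Fin n)) : Prop :=
  ∃ H : SimpleGraph (Fin n),
    (∀ e ∈ H.edgeSet, e ∉ G.edgeSet) ∧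
    (∀ e ∈ H.edgeSet, ∀ f ∈ H.edgeSet, ¬ Cross n e f) ∧
    (∀ v : Fin n, v ∈ R ↔ Odd ((H.neighborSet v).ncard))

/-- Condition (iii): `G` has two parallel red-blue diagonals `{v_i, v_m}` and
`{v_k, v_l}`, with `v_i, v_k` blue and `v_l, v_m` red (possibly `v_l = v_m`),
together with a vertex `v_j` of degree two in `G`, such that `v_i, v_j, v_k, v_l, v_m`
occur in this clockwise cyclic order. -/
def HasParallelRedBlueDiagonalsWithDegTwoVertex (n : ℕ) (G : SimpleGraph (Fin n))
    (R : Set (Fin n)) : Prop :=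
  ∃ i j k l m : Fin n,
    s(i, m) ∈ G.edgeSet ∧ IsDiagonal n s(i, m) ∧
    s(k, l) ∈ G.edgeSet ∧ IsDiagonal n s(k, l) ∧
    i ∉ R ∧ k ∉ R ∧ l ∈ R ∧ m ∈ R ∧
    (G.neighborSet j).ncard = 2 ∧
    0 < (j - i).val ∧ (j - i).val < (k - i).val ∧
    (k - i).val < (l - i).val ∧ (l - i).val ≤ (m - i).val

/-!
Measure positions clockwise from the blue endpoint `i` of the diagonal `{i, m}`, so that
`0 < j < k < k + 1 < l ≤ m ≤ n - 2`. Join the red vertices of the arc `(i, j)` to `i - 1`, those of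
`(j, k)` to `k + 1` and those of `(k + 1, i - 1)` to `j`, and join `j` to `i - 1` (resp. `k + 1`)
exactly when this is needed to give that centre the right parity. Each red leaf then has degree
one and each remaining blue vertex (`i` and `k` among them) degree zero, while the parity at `j`
is forced by the handshake lemma since `|R|` is even. The three stars are nested, hence pairwise
non-crossing; the edges at `i - 1` and `k + 1` cross the diagonals `{i, m}` and `{k, l}` of `G`,
so they are not edges of `G`; and the edges at `j` avoid `j ± 1`, the only neighbours of `j` in
`G`.
-/

namespace Fin

variable {n : ℕ} [NeZero n]

lemma val_sub_inj {x y : Fin n} (i : Fin n) : (x - i).val = (y - i).val ↔ x = y :=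
  Fin.val_inj.trans sub_left_inj

lemma val_sub_eq_or (i a b : Fin n) :
    ((a - i).val ≤ (b - i).val ∧ (b - a).val = (b - i).val - (a - i).val) ∨
    ((b - i).val < (a - i).val ∧ (b - a).val = n + (b - i).val - (a - i).val) := by
  rw [← sub_sub_sub_cancel_right b a i]
  rcases le_or_gt (a - i) (b - i) with h | h
  · exact .inl ⟨h, Fin.coe_sub_iff_le.mpr h⟩
  · exact .inr ⟨h, Fin.coe_sub_iff_lt.mpr h⟩

lemma val_sub_of_val_sub_eq_one (i : Fin n) {a b : Fin n} (h : (b - a).val = 1) :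
    (b - i).val = (a - i).val + 1 ∨ ((b - i).val = 0 ∧ (a - i).val + 1 = n) := by
  have := (a - i).isLt
  rcases val_sub_eq_or i a b with ⟨_, h'⟩ | ⟨_, h'⟩ <;> omega

lemma val_add_one_sub_self (x : Fin n) (hn : 1 < n) : (x + 1 - x).val = 1 := by
  rw [add_sub_cancel_left, val_one', Nat.mod_eq_of_lt hn]

lemma val_sub_sub_one (x : Fin n) (hn : 1 < n) : (x - (x - 1)).val = 1 := by
  rw [sub_sub_cancel, val_one', Nat.mod_eq_of_lt hn]

lemma val_add_one_sub {i x : Fin n} (h : (x - i).val + 1 < n) :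
    (x + 1 - i).val = (x - i).val + 1 := by
  have := val_sub_of_val_sub_eq_one i (val_add_one_sub_self x (by omega))
  omega

lemma val_sub_one_sub {i x : Fin n} (h : 0 < (x - i).val) :
    (x - 1 - i).val = (x - i).val - 1 := by
  have := (x - i).isLt
  have := val_sub_of_val_sub_eq_one i (val_sub_sub_one x (by omega))
  omega

lemma val_sub_one_sub_self (i : Fin n) (hn : 1 < n) : (i - 1 - i).val = n - 1 := by
  have := val_sub_of_val_sub_eq_one i (val_sub_sub_one i hn)
  simp only [sub_self, val_zero] at this
  omega

end Fin

section Polygon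

variable {n : ℕ} [NeZero n]

lemma inArc_iff (i a b x : Fin n) :
    InArc n a b x ↔ ((a - i).val < (x - i).val ∧ (x - i).val < (b - i).val) ∨
      ((b - i).val < (a - i).val ∧
        ((x - i).val < (b - i).val ∨ (a - i).val < (x - i).val)) := by
  have := (x - i).isLt
  have := (b - i).isLt
  unfold InArc
  rcases Fin.val_sub_eq_or i a x with ⟨_, hx⟩ | ⟨_, hx⟩ <;>
    rcases Fin.val_sub_eq_or i a b with ⟨_, hb⟩ | ⟨_, hb⟩ <;>
    rw [hx, hb] <;> constructor <;> intro h <;> omega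

def Interleaved (a b c d : ℕ) : Prop :=
  (min a b < c ∧ c < max a b ∧ (d < min a b ∨ max a b < d)) ∨
    (min a b < d ∧ d < max a b ∧ (c < min a b ∨ max a b < c))

lemma cross_iff_interleaved (i a b c d : Fin n) :
    Cross n s(a, b) s(c, d) ↔
      Interleaved (a - i).val (b - i).val (c - i).val (d - i).val := by
  unfold Interleaved
  constructor
  · rintro ⟨a', b', c', d', he, hf, hc, hd⟩
    rw [inArc_iff i] at hc hd
    rcases Sym2.eq_iff.mp he with ⟨rfl, rfl⟩ | ⟨rfl, rfl⟩ <;>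
      rcases Sym2.eq_iff.mp hf with ⟨rfl, rfl⟩ | ⟨rfl, rfl⟩ <;> omega
  · have hab : s(a, b) = s(b, a) := Sym2.eq_swap
    have hcd : s(c, d) = s(d, c) := Sym2.eq_swap
    simp only [Cross, inArc_iff i]
    rintro (⟨h₁, h₂, h₃⟩ | ⟨h₁, h₂, h₃⟩) <;>
      rcases le_total (a - i).val (b - i).val with h | h
    · exact ⟨a, b, c, d, rfl, rfl, by omega, by omega⟩
    · exact ⟨b, a, c, d, hab, rfl, by omega, by omega⟩
    · exact ⟨a, b, d, c, rfl, hcd, by omega, by omega⟩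
    · exact ⟨b, a, d, c, hab, hcd, by omega, by omega⟩

lemma IsDiagonal.add_two_le (i : Fin n) {a b : Fin n} (hd : IsDiagonal n s(a, b))
    (hab : (a - i).val < (b - i).val) :
    (a - i).val + 2 ≤ (b - i).val ∧ (b - i).val + 2 ≤ (a - i).val + n := by
  have := (b - i).isLt
  have hba : (b - a).val ≠ 1 := fun h => hd.2 ⟨a, b, rfl, h⟩
  have hab' : (a - b).val ≠ 1 := fun h => hd.2 ⟨b, a, Sym2.eq_swap, h⟩
  rcases Fin.val_sub_eq_or i a b with ⟨_, h₁⟩ | ⟨_, h₁⟩ <;>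
    rcases Fin.val_sub_eq_or i b a with ⟨_, h₂⟩ | ⟨_, h₂⟩ <;> omega

lemma neighborSet_eq_of_ncard_eq_two {G : SimpleGraph (Fin n)} (hn : 3 ≤ n)
    (hbdry : ∀ e, IsBoundaryEdge n e → e ∈ G.edgeSet) {j : Fin n}
    (hdeg : (G.neighborSet j).ncard = 2) : G.neighborSet j = {j - 1, j + 1} := by
  have hsucc := Fin.val_add_one_sub (i := j) (x := j) (by simp; omega)
  have hpred := Fin.val_sub_one_sub_self j (by omega)
  have hne : j - 1 ≠ j + 1 := fun h => by
    rw [h] at hpred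
    simp only [sub_self, Fin.val_zero] at hsucc
    omega
  symm
  apply Set.eq_of_subset_of_ncard_le _ (by rw [hdeg, Set.ncard_pair hne]) (Set.toFinite _)
  rintro x (rfl | rfl)
  · exact hbdry _ ⟨j - 1, j, Sym2.eq_swap, Fin.val_sub_sub_one j (by omega)⟩
  · exact hbdry _ ⟨j, j + 1, rfl, Fin.val_add_one_sub_self j (by omega)⟩

end Polygon

namespace Set

variable {V : Type*}

lemma eq_insert_of_forall_ne {S T : Set V} {a : V} (h : ∀ v ≠ a, v ∈ S ↔ v ∈ T)
    (hS : a ∈ S) : S = insert a T := by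
  ext v
  by_cases hv : v = a
  · simpa [hv] using hS
  · simpa [hv] using h v hv

open Classical in
noncomputable def adjustParity (A : Set V) (a : V) (P : Prop) : Set V :=
  if P ↔ Odd A.ncard then A else insert a A

lemma subset_adjustParity (A : Set V) (a : V) (P : Prop) : A ⊆ A.adjustParity a P := by
  unfold adjustParity; split_ifs <;> simp [subset_insert]

lemma adjustParity_subset (A : Set V) (a : V) (P : Prop) :
    A.adjustParity a P ⊆ insert a A := by
  unfold adjustParity; split_ifs <;> simp [subset_insert]

lemma mem_adjustParity_of_ne {A : Set V} {a x : V} (hx : x ≠ a) (P : Prop) :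
    x ∈ A.adjustParity a P ↔ x ∈ A :=
  ⟨fun h => (adjustParity_subset A a P h).resolve_left hx, fun h => subset_adjustParity A a P h⟩

lemma iff_odd_ncard_adjustParity {A : Set V} (hA : A.Finite) {a : V} (ha : a ∉ A) (P : Prop) :
    P ↔ Odd (A.adjustParity a P).ncard := by
  unfold adjustParity
  split_ifs with h
  · exact h
  · rw [ncard_insert_of_notMem ha hA, Nat.odd_add_one]
    tauto

end Set

namespace SimpleGraph

variable {V : Type*}

def starOn (c : V) (L : Set V) : SimpleGraph V :=
  fromRel fun x y => x = c ∧ y ∈ L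

lemma neighborSet_starOn_self {c : V} {L : Set V} (hc : c ∉ L) :
    (starOn c L).neighborSet c = L := by
  ext w
  simp only [mem_neighborSet, starOn, fromRel_adj]
  grind

lemma neighborSet_starOn_of_mem {c v : V} {L : Set V} (hvc : v ≠ c) (hv : v ∈ L) :
    (starOn c L).neighborSet v = {c} := by
  ext w
  simp only [mem_neighborSet, starOn, fromRel_adj, Set.mem_singleton_iff]
  grind

lemma neighborSet_starOn_of_notMem {c v : V} {L : Set V} (hvc : v ≠ c) (hv : v ∉ L) :
    (starOn c L).neighborSet v = ∅ := by
  ext w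
  simp only [mem_neighborSet, starOn, fromRel_adj, Set.mem_empty_iff_false]
  grind

lemma exists_eq_of_mem_edgeSet_starOn {c : V} {L : Set V} {e : Sym2 V}
    (he : e ∈ (starOn c L).edgeSet) : ∃ x ∈ L, e = s(c, x) := by
  induction e using Sym2.ind with
  | h v w =>
    obtain ⟨-, ⟨rfl, hw⟩ | ⟨rfl, hv⟩⟩ := he
    · exact ⟨w, hw, rfl⟩
    · exact ⟨v, hv, Sym2.eq_swap⟩

lemma even_ncard_setOf_odd_ncard_neighborSet [Fintype V] (H : SimpleGraph V) :
    Even {v | Odd (H.neighborSet v).ncard}.ncard := by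
  classical
  have hdeg : ∀ v, (H.neighborSet v).ncard = H.degree v := fun v => by
    rw [Set.ncard_eq_toFinset_card', ← card_neighborSet_eq_degree, Set.toFinset_card]
  have : {v | Odd (H.neighborSet v).ncard} = ↑({v | Odd (H.degree v)} : Finset V) := by
    ext; simp [hdeg]
  rw [this, Set.ncard_coe_finset]
  exact H.even_card_odd_degree_vertices

lemma forall_mem_iff_odd_of_forall_ne [Fintype V] (H : SimpleGraph V) {R : Set V}
    (hR : Even R.ncard) (j : V) (h : ∀ v ≠ j, v ∈ R ↔ Odd (H.neighborSet v).ncard) :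
    ∀ v, v ∈ R ↔ Odd (H.neighborSet v).ncard := by
  intro v
  by_cases hvj : v ≠ j
  · exact h v hvj
  rw [not_not.mp hvj]
  set O : Set V := {v | Odd (H.neighborSet v).ncard}
  have hO : Even O.ncard := H.even_ncard_setOf_odd_ncard_neighborSet
  change j ∈ R ↔ j ∈ O
  by_cases hjR : j ∈ R <;> by_cases hjO : j ∈ O
  · exact iff_of_true hjR hjO
  · rw [Set.eq_insert_of_forall_ne (S := R) (T := O) h hjR, Set.ncard_insert_of_notMem hjO] at hR
    exact absurd hO (Nat.even_add_one.mp hR)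
  · rw [Set.eq_insert_of_forall_ne (S := O) (T := R) (fun v hv => (h v hv).symm) hjO,
      Set.ncard_insert_of_notMem hjR] at hO
    exact absurd hR (Nat.even_add_one.mp hO)
  · exact iff_of_false hjR hjO

end SimpleGraph
section ParityStars

open SimpleGraph Set

variable {n : ℕ}

def redBetween (R : Set (Fin n)) (i : Fin n) (a b : ℕ) : Set (Fin n) :=
  {x | x ∈ R ∧ a < (x - i).val ∧ (x - i).val < b}

noncomputable def parityStars [NeZero n] (R : Set (Fin n)) (i j k : Fin n) :
    SimpleGraph (Fin n) :=
  starOn (i - 1) ((redBetween R i 0 (j - i).val).adjustParity j (i - 1 ∈ R)) ⊔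
  starOn (k + 1) ((redBetween R i (j - i).val (k - i).val).adjustParity j (k + 1 ∈ R)) ⊔
  starOn j (redBetween R i ((k - i).val + 1) (n - 1))

variable {R : Set (Fin n)} {i j k : Fin n}

lemma val_sub_of_mem_adjustParity {a b : ℕ} {P : Prop} {x : Fin n}
    (h : x ∈ (redBetween R i a b).adjustParity j P) :
    (x - i).val = (j - i).val ∨ a < (x - i).val ∧ (x - i).val < b := by
  obtain rfl | ⟨-, h⟩ := adjustParity_subset _ _ _ h
  exacts [.inl rfl, .inr h]

variable [NeZero n]

lemma exists_eq_of_mem_edgeSet_parityStars (hj : 0 < (j - i).val)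
    (hjk : (j - i).val < (k - i).val) (hk : (k - i).val + 3 ≤ n) {e : Sym2 (Fin n)}
    (he : e ∈ (parityStars R i j k).edgeSet) :
    ∃ c x, e = s(c, x) ∧
      ((c - i).val = n - 1 ∧ 0 < (x - i).val ∧ (x - i).val ≤ (j - i).val ∨
        (c - i).val = (k - i).val + 1 ∧
          (j - i).val ≤ (x - i).val ∧ (x - i).val < (k - i).val ∨
        c = j ∧ (k - i).val + 1 < (x - i).val ∧ (x - i).val < n - 1) := by
  have hi₁ := Fin.val_sub_one_sub_self i (by omega)
  have hk₁ := Fin.val_add_one_sub (i := i) (x := k) (by omega)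
  simp only [parityStars, edgeSet_sup, mem_union] at he
  rcases he with (he | he) | he <;> obtain ⟨x, hx, rfl⟩ := exists_eq_of_mem_edgeSet_starOn he
  · obtain rfl | ⟨-, hx⟩ := adjustParity_subset _ _ _ hx <;>
      exact ⟨_, _, rfl, .inl (by omega)⟩
  · obtain rfl | ⟨-, hx⟩ := adjustParity_subset _ _ _ hx <;>
      exact ⟨_, _, rfl, .inr (.inl (by omega))⟩
  · exact ⟨_, _, rfl, .inr (.inr ⟨rfl, hx.2⟩)⟩

lemma parityStars_not_cross (hj : 0 < (j - i).val) (hjk : (j - i).val < (k - i).val)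
    (hk : (k - i).val + 3 ≤ n) :
    ∀ e ∈ (parityStars R i j k).edgeSet, ∀ f ∈ (parityStars R i j k).edgeSet,
      ¬ Cross n e f := by
  intro e he f hf
  obtain ⟨c, x, rfl, hcx⟩ := exists_eq_of_mem_edgeSet_parityStars hj hjk hk he
  obtain ⟨d, y, rfl, hdy⟩ := exists_eq_of_mem_edgeSet_parityStars hj hjk hk hf
  rw [cross_iff_interleaved i, Interleaved]
  rcases hcx with hcx | hcx | ⟨rfl, hcx⟩ <;> rcases hdy with hdy | hdy | ⟨rfl, hdy⟩ <;>
    omega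

lemma parityStars_edge_notMem {G : SimpleGraph (Fin n)} {l m : Fin n}
    (hG : ∀ e ∈ G.edgeSet, ∀ f ∈ G.edgeSet, ¬ Cross n e f)
    (him : s(i, m) ∈ G.edgeSet) (hm : (m - i).val + 2 ≤ n)
    (hkl : s(k, l) ∈ G.edgeSet) (hl : (k - i).val + 2 ≤ (l - i).val)
    (hlm : (l - i).val ≤ (m - i).val) (hjG : G.neighborSet j = {j - 1, j + 1})
    (hj : 0 < (j - i).val) (hjk : (j - i).val < (k - i).val) :
    ∀ e ∈ (parityStars R i j k).edgeSet, e ∉ G.edgeSet := by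
  have hi : (i - i).val = 0 := by simp
  intro e he heG
  obtain ⟨c, x, rfl, h⟩ := exists_eq_of_mem_edgeSet_parityStars hj hjk (by omega) he
  rcases h with h | h | ⟨rfl, h⟩
  · refine hG _ him _ heG ((cross_iff_interleaved i _ _ _ _).mpr ?_)
    rw [Interleaved]; omega
  · refine hG _ hkl _ heG ((cross_iff_interleaved i _ _ _ _).mpr ?_)
    rw [Interleaved]; omega
  · have hx : x ∈ G.neighborSet c := heG
    rw [hjG] at hx
    rcases hx with rfl | rfl
    · rw [Fin.val_sub_one_sub hj] at h; omega
    · rw [Fin.val_add_one_sub (by omega)] at h; omega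

lemma odd_iff_parityStars_sub_one (hjk : (j - i).val < (k - i).val)
    (hk : (k - i).val + 3 ≤ n) :
    i - 1 ∈ R ↔ Odd ((parityStars R i j k).neighborSet (i - 1)).ncard := by
  have hi₁ := Fin.val_sub_one_sub_self i (by omega)
  have hk₁ := Fin.val_add_one_sub (i := i) (x := k) (by omega)
  rw [parityStars, neighborSet_sup, neighborSet_sup,
    neighborSet_starOn_self (fun h => by have := val_sub_of_mem_adjustParity h; omega),
    neighborSet_starOn_of_notMem ((Fin.val_sub_inj i).not.mp (by omega))
      (fun h => by have := val_sub_of_mem_adjustParity h; omega),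
    neighborSet_starOn_of_notMem ((Fin.val_sub_inj i).not.mp (by omega))
      (fun h => by have := h.2; omega),
    union_empty, union_empty]
  exact iff_odd_ncard_adjustParity (toFinite _) (fun h => by have := h.2; omega) _

lemma odd_iff_parityStars_add_one (hjk : (j - i).val < (k - i).val)
    (hk : (k - i).val + 3 ≤ n) :
    k + 1 ∈ R ↔ Odd ((parityStars R i j k).neighborSet (k + 1)).ncard := by
  have hi₁ := Fin.val_sub_one_sub_self i (by omega)
  have hk₁ := Fin.val_add_one_sub (i := i) (x := k) (by omega)
  rw [parityStars, neighborSet_sup, neighborSet_sup,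
    neighborSet_starOn_of_notMem ((Fin.val_sub_inj i).not.mp (by omega))
      (fun h => by have := val_sub_of_mem_adjustParity h; omega),
    neighborSet_starOn_self (fun h => by have := val_sub_of_mem_adjustParity h; omega),
    neighborSet_starOn_of_notMem ((Fin.val_sub_inj i).not.mp (by omega))
      (fun h => by have := h.2; omega),
    empty_union, union_empty]
  exact iff_odd_ncard_adjustParity (toFinite _) (fun h => by have := h.2; omega) _

lemma neighborSet_parityStars_of_notMem {v : Fin n} (hvi : v ≠ i - 1) (hvk : v ≠ k + 1)
    (hvj : v ≠ j) (hvR : v ∉ R) : (parityStars R i j k).neighborSet v = ∅ := by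
  rw [parityStars, neighborSet_sup, neighborSet_sup,
    neighborSet_starOn_of_notMem hvi (fun h => hvR ((mem_adjustParity_of_ne hvj _).mp h).1),
    neighborSet_starOn_of_notMem hvk (fun h => hvR ((mem_adjustParity_of_ne hvj _).mp h).1),
    neighborSet_starOn_of_notMem hvj (fun h => hvR h.1), union_empty, union_empty]

lemma ncard_neighborSet_parityStars_of_mem (hjk : (j - i).val < (k - i).val)
    (hk : (k - i).val + 3 ≤ n) (hiR : i ∉ R) (hkR : k ∉ R) {v : Fin n} (hvi : v ≠ i - 1)
    (hvk : v ≠ k + 1) (hvj : v ≠ j) (hvR : v ∈ R) :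
    ((parityStars R i j k).neighborSet v).ncard = 1 := by
  have hi : (i - i).val = 0 := by simp
  have := Fin.val_sub_one_sub_self i (by omega)
  have := Fin.val_add_one_sub (i := i) (x := k) (by omega)
  have := (v - i).isLt
  have := (Fin.val_sub_inj i).not.mpr (ne_of_mem_of_not_mem hvR hiR)
  have := (Fin.val_sub_inj i).not.mpr (ne_of_mem_of_not_mem hvR hkR)
  have := (Fin.val_sub_inj i).not.mpr hvi
  have := (Fin.val_sub_inj i).not.mpr hvk
  have := (Fin.val_sub_inj i).not.mpr hvj
  have hvL₁ := mem_adjustParity_of_ne (A := redBetween R i 0 (j - i).val) hvj (i - 1 ∈ R)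
  have hvL₂ :=
    mem_adjustParity_of_ne (A := redBetween R i (j - i).val (k - i).val) hvj (k + 1 ∈ R)
  rw [parityStars, neighborSet_sup, neighborSet_sup]
  rcases (by omega : (v - i).val < (j - i).val ∨
    (j - i).val < (v - i).val ∧ (v - i).val < (k - i).val ∨ (k - i).val + 1 < (v - i).val)
    with h | h | h
  · rw [neighborSet_starOn_of_mem hvi (hvL₁.mpr ⟨hvR, by omega, h⟩),
      neighborSet_starOn_of_notMem hvk (fun h' => by have := (hvL₂.mp h').2; omega),
      neighborSet_starOn_of_notMem hvj (fun h' => by have := h'.2; omega)]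
    simp
  · rw [neighborSet_starOn_of_notMem hvi (fun h' => by have := (hvL₁.mp h').2; omega),
      neighborSet_starOn_of_mem hvk (hvL₂.mpr ⟨hvR, h⟩),
      neighborSet_starOn_of_notMem hvj (fun h' => by have := h'.2; omega)]
    simp
  · rw [neighborSet_starOn_of_notMem hvi (fun h' => by have := (hvL₁.mp h').2; omega),
      neighborSet_starOn_of_notMem hvk (fun h' => by have := (hvL₂.mp h').2; omega),
      neighborSet_starOn_of_mem hvj
        (show v ∈ redBetween R i ((k - i).val + 1) (n - 1) from ⟨hvR, h, by omega⟩)]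
    simp

lemma parityStars_odd_iff (hjk : (j - i).val < (k - i).val) (hk : (k - i).val + 3 ≤ n)
    (hiR : i ∉ R) (hkR : k ∉ R) :
    ∀ v ≠ j, v ∈ R ↔ Odd ((parityStars R i j k).neighborSet v).ncard := by
  intro v hvj
  by_cases hvi : v = i - 1
  · exact hvi ▸ odd_iff_parityStars_sub_one hjk hk
  by_cases hvk : v = k + 1
  · exact hvk ▸ odd_iff_parityStars_add_one hjk hk
  by_cases hvR : v ∈ R
  · simp [hvR, ncard_neighborSet_parityStars_of_mem hjk hk hiR hkR hvi hvk hvj hvR]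
  · simp [hvR, neighborSet_parityStars_of_notMem hvi hvk hvj hvR]

end ParityStars

/-- Let `G` be a maximal outerplane graph on `Fin n` with red vertex set
`R` of even cardinality.  If `G` contains two parallel red-blue diagonals
`{v_i, v_m}` and `{v_k, v_l}` (with `v_i, v_k` blue and `v_l, v_m` red, possibly
`v_l = v_m`) and a vertex `v_j` of degree two in `G`, such that `v_i, v_j, v_k, v_l,
v_m` occur in this clockwise cyclic order, then `G` is augmentable to meet `R`. -/
theorem stmt_11 (n : ℕ) (G : SimpleGraph (Fin n)) (hG : IsMOP n G)
    (R : Set (Fin n)) (hR : Even R.ncard)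
    (hpar : HasParallelRedBlueDiagonalsWithDegTwoVertex n G R) :
    Augmentable n G R := by
  obtain ⟨hn, hbdry, -, hnc, -⟩ := hG
  obtain ⟨i, j, k, l, m, him, him_diag, hkl, hkl_diag, hiR, hkR, -, -, hdeg, hj, hjk, hkl_pos,
    hlm⟩ := hpar
  have : NeZero n := ⟨by omega⟩
  have hi : (i - i).val = 0 := by simp
  have hl := hkl_diag.add_two_le i hkl_pos
  have hm := him_diag.add_two_le i (by omega)
  refine ⟨parityStars R i j k,
    parityStars_edge_notMem hnc him (by omega) hkl hl.1 hlm
      (neighborSet_eq_of_ncard_eq_two hn hbdry hdeg) hj hjk,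
    parityStars_not_cross hj hjk (by omega),
    SimpleGraph.forall_mem_iff_odd_of_forall_ne _ hR j
      (parityStars_odd_iff hjk (by omega) hiR hkR)⟩
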